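/- Let u ∈ ℝᵖ, S ⊆ {1,…,m}, λ₁,…,λ_m > 0, and ℓ ≥ 1. Define λ₋² = min{ Σ_{j ∈ S'} λ_j² : S' ⊆ {1,…,m}, |G_{S'}| ≥ ℓ }. Let S₀ ⊆ {1,…,m} \ S consist of indices j with the largest values of ‖u_{G_j}‖₂/λ_j among j ∉ S, chosen so that ℓ ≤ |G_{S₀}| < ℓ + k₀. Then √( Σ_{j ∉ S ∪ S₀} ‖u_{G_j}‖₂² ) ≤ (2λ₋)^{−1} Σ_{j ∉ S} λ_j ‖u_{G_j}‖₂. -/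

import Mathlib

/-!
Write `a_j = ‖u_{G_j}‖₂`, `A = Σ_{j ∈ S₀} λ_j a_j` and `B = Σ_{j ∉ S ∪ S₀} λ_j a_j`.
Since every ratio `a_j / λ_j` inside `S₀` dominates every ratio outside `S ∪ S₀`,
`(Σ_{S₀} λ_j²) · Σ_{j ∉ S ∪ S₀} a_j² ≤ A · B`, and `λ₋² ≤ Σ_{S₀} λ_j²` because `|G_{S₀}| ≥ ℓ`.
AM-GM, `A · B ≤ ((A + B) / 2)²`, finishes the proof. The minimum defining `λ₋²` ranges over
finitely many values, so it is attained by a nonempty set of groups and `λ₋ > 0`.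
-/

open Matrix MeasureTheory ProbabilityTheory

noncomputable def norm2 {ι : Type*} [Fintype ι] (v : ι → ℝ) : ℝ :=
  Real.sqrt (∑ i, v i ^ 2)

open scoped Classical in
noncomputable def invSqrt {ι : Type*} [Fintype ι] [DecidableEq ι] (M : Matrix ι ι ℝ) :
    Matrix ι ι ℝ :=
  if h : M.PosSemidef then
    ((h.1.eigenvectorUnitary : Matrix ι ι ℝ) * diagonal (RCLike.ofReal ∘ Real.sqrt ∘ h.1.eigenvalues) *
      (star h.1.eigenvectorUnitary : Matrix ι ι ℝ))⁻¹ else 0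

def colSub {n p : ℕ} (X : Matrix (Fin n) (Fin p) ℝ) (F : Finset (Fin p)) :
    Matrix (Fin n) {i : Fin p // i ∈ F} ℝ :=
  Matrix.of fun r c => X r c.1

noncomputable def groupProj {n p : ℕ} (X : Matrix (Fin n) (Fin p) ℝ) (F : Finset (Fin p))
    (v : Fin n → ℝ) : ℝ :=
  norm2 ((invSqrt ((colSub X F)ᵀ * colSub X F)) *ᵥ ((colSub X F)ᵀ *ᵥ v))

def restr {p : ℕ} (F : Finset (Fin p)) (β : Fin p → ℝ) : Fin p → ℝ :=
  fun i => if i ∈ F then β i else 0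

/-- `G` is a partition of the index set into disjoint groups. -/
def IsPartition {p m : ℕ} (G : Fin m → Finset (Fin p)) : Prop :=
  (∀ j₁ j₂, j₁ ≠ j₂ → Disjoint (G j₁) (G j₂)) ∧ Finset.univ.biUnion G = Finset.univ

/-- `β` is `(g, k)` strongly group-sparse. -/
def SGS {p m : ℕ} (G : Fin m → Finset (Fin p)) (g k : ℕ) (β : Fin p → ℝ) : Prop :=
  ∃ S : Finset (Fin m), S.card ≤ g ∧ (S.biUnion G).card ≤ k ∧
    ∀ i, β i ≠ 0 → i ∈ S.biUnion G

noncomputable def rhoMinusF {n p : ℕ} (X : Matrix (Fin n) (Fin p) ℝ) (F : Finset (Fin p)) : ℝ :=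
  sInf {r : ℝ | ∃ β : Fin p → ℝ, β ≠ 0 ∧ (∀ i ∉ F, β i = 0) ∧
    r = norm2 (X *ᵥ β) ^ 2 / (n * norm2 β ^ 2)}

noncomputable def rhoPlusF {n p : ℕ} (X : Matrix (Fin n) (Fin p) ℝ) (F : Finset (Fin p)) : ℝ :=
  sSup {r : ℝ | ∃ β : Fin p → ℝ, β ≠ 0 ∧ (∀ i ∉ F, β i = 0) ∧
    r = norm2 (X *ᵥ β) ^ 2 / (n * norm2 β ^ 2)}

noncomputable def rhoMinusN {n p m : ℕ} (X : Matrix (Fin n) (Fin p) ℝ)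
    (G : Fin m → Finset (Fin p)) (s : ℕ) : ℝ :=
  sInf {r : ℝ | ∃ S : Finset (Fin m), (S.biUnion G).card ≤ s ∧ r = rhoMinusF X (S.biUnion G)}

noncomputable def rhoPlusN {n p m : ℕ} (X : Matrix (Fin n) (Fin p) ℝ)
    (G : Fin m → Finset (Fin p)) (s : ℕ) : ℝ :=
  sSup {r : ℝ | ∃ S : Finset (Fin m), (S.biUnion G).card ≤ s ∧ r = rhoPlusF X (S.biUnion G)}

/-- The group Lasso objective. -/
noncomputable def glObj {n p m : ℕ} (X : Matrix (Fin n) (Fin p) ℝ)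
    (G : Fin m → Finset (Fin p)) (lam : Fin m → ℝ) (y : Fin n → ℝ) (β : Fin p → ℝ) : ℝ :=
  (1 / (n : ℝ)) * norm2 (X *ᵥ β - y) ^ 2 + ∑ j, lam j * norm2 (restr (G j) β)

open Finset

theorem Set.finite_setOf_exists_eq {α β : Type*} [Finite α] (P : α → Prop) (f : α → β) :
    {r | ∃ x, P x ∧ r = f x}.Finite :=
  (Set.finite_range f).subset fun _ ⟨x, _, hr⟩ => ⟨x, hr.symm⟩

section MinSum

variable {ι : Type*} [Fintype ι] {w : ι → ℝ} {P : Finset ι → Prop} {s₀ : Finset ι}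

theorem csInf_setOf_sum_le (hs₀ : P s₀) :
    sInf {r | ∃ s, P s ∧ r = ∑ j ∈ s, w j} ≤ ∑ j ∈ s₀, w j :=
  csInf_le (Set.finite_setOf_exists_eq _ _).bddBelow ⟨s₀, hs₀, rfl⟩

theorem csInf_setOf_sum_pos (hw : ∀ j, 0 < w j) (hP : ∀ s, P s → s.Nonempty) (hs₀ : P s₀) :
    0 < sInf {r | ∃ s, P s ∧ r = ∑ j ∈ s, w j} := by
  have hne : {r | ∃ s, P s ∧ r = ∑ j ∈ s, w j}.Nonempty := ⟨_, s₀, hs₀, rfl⟩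
  obtain ⟨s, hs, hmin⟩ := hne.csInf_mem (Set.finite_setOf_exists_eq _ _)
  exact hmin ▸ sum_pos (fun j _ => hw j) (hP s hs)

end MinSum

theorem sum_sq_mul_sum_sq_le_of_div_le {ι : Type*} {s t : Finset ι} {a w : ι → ℝ}
    (hws : ∀ j ∈ s, 0 < w j) (hwt : ∀ j ∈ t, 0 < w j) (ha : ∀ j ∈ t, 0 ≤ a j)
    (h : ∀ j ∈ s, ∀ j' ∈ t, a j' / w j' ≤ a j / w j) :
    (∑ j ∈ s, w j ^ 2) * ∑ j ∈ t, a j ^ 2 ≤ (∑ j ∈ s, w j * a j) * ∑ j ∈ t, w j * a j := by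
  rw [sum_mul_sum, sum_mul_sum]
  refine sum_le_sum fun j hj => sum_le_sum fun j' hj' => ?_
  have hcross : a j' * w j ≤ a j * w j' :=
    (div_le_div_iff₀ (hwt j' hj') (hws j hj)).mp (h j hj j' hj')
  have hnonneg : 0 ≤ w j * a j' := mul_nonneg (hws j hj).le (ha j' hj')
  calc w j ^ 2 * a j' ^ 2 = (a j' * w j) * (w j * a j') := by ring
    _ ≤ (a j * w j') * (w j * a j') := mul_le_mul_of_nonneg_right hcross hnonneg
    _ = w j * a j * (w j' * a j') := by ring

theorem sqrt_le_inv_two_mul_mul_add {L A B X : ℝ} (hL : 0 < L) (hAB : 0 ≤ A + B)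
    (h : L ^ 2 * X ≤ A * B) : √X ≤ (2 * L)⁻¹ * (A + B) := by
  refine Real.sqrt_le_iff.mpr ⟨by positivity, ?_⟩
  rw [mul_pow, inv_pow, mul_pow, ← div_eq_inv_mul, le_div_iff₀ (by positivity)]
  nlinarith [sq_nonneg (A - B)]

theorem stmt_11_general (p m : ℕ) (G : Fin m → Finset (Fin p))
    (u : Fin p → ℝ) (S : Finset (Fin m)) (lam : Fin m → ℝ) (hlam : ∀ j, 0 < lam j)
    (ℓ : ℕ) (hℓ : 1 ≤ ℓ)
    (lamMinus : ℝ)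
    (hlamMinus : lamMinus = Real.sqrt (sInf {r : ℝ | ∃ S' : Finset (Fin m),
      ℓ ≤ (S'.biUnion G).card ∧ r = ∑ j ∈ S', lam j ^ 2}))
    (S0 : Finset (Fin m)) (hS0S : Disjoint S0 S)
    (hS0top : ∀ j ∈ S0, ∀ j', j' ∉ S → j' ∉ S0 →
      norm2 (restr (G j') u) / lam j' ≤ norm2 (restr (G j) u) / lam j)
    (hcard1 : ℓ ≤ (S0.biUnion G).card) :
    Real.sqrt (∑ j ∈ Finset.univ \ (S ∪ S0), norm2 (restr (G j) u) ^ 2) ≤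
      (2 * lamMinus)⁻¹ * ∑ j ∈ Finset.univ \ S, lam j * norm2 (restr (G j) u) := by
  set a : Fin m → ℝ := fun j => norm2 (restr (G j) u)
  have ha : ∀ j, 0 ≤ a j := fun j => Real.sqrt_nonneg _
  have hweighted : ∀ s : Finset (Fin m), 0 ≤ ∑ j ∈ s, lam j * a j :=
    fun s => sum_nonneg fun j _ => mul_nonneg (hlam j).le (ha j)
  have hP : ∀ S' : Finset (Fin m), ℓ ≤ (S'.biUnion G).card → S'.Nonempty := fun S' h =>
    (biUnion_nonempty.mp (card_pos.mp (lt_of_lt_of_le hℓ h))).imp fun _ h => h.1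
  have hInf_pos := csInf_setOf_sum_pos (fun j => pow_pos (hlam j) 2) hP hcard1
  have hlamMinus_pos : 0 < lamMinus := hlamMinus ▸ Real.sqrt_pos.mpr hInf_pos
  have hlamMinus_sq : lamMinus ^ 2 ≤ ∑ j ∈ S0, lam j ^ 2 := by
    rw [hlamMinus, Real.sq_sqrt hInf_pos.le]
    exact csInf_setOf_sum_le hcard1
  have hsplit : ∑ j ∈ univ \ S, lam j * a j =
      ∑ j ∈ S0, lam j * a j + ∑ j ∈ univ \ (S ∪ S0), lam j * a j := by
    rw [← sum_sdiff (subset_sdiff.mpr ⟨subset_univ _, hS0S⟩), sdiff_sdiff_left, add_comm]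
    rfl
  have hkey := sum_sq_mul_sum_sq_le_of_div_le (s := S0) (t := univ \ (S ∪ S0)) (a := a)
    (fun j _ => hlam j) (fun j _ => hlam j) (fun j _ => ha j) fun j hj j' hj' => by
      simp only [mem_sdiff, mem_union, not_or] at hj'
      exact hS0top j hj j' hj'.2.1 hj'.2.2
  rw [hsplit]
  refine sqrt_le_inv_two_mul_mul_add hlamMinus_pos (add_nonneg (hweighted _) (hweighted _)) ?_
  exact (mul_le_mul_of_nonneg_right hlamMinus_sq (sum_nonneg fun j _ => sq_nonneg _)).trans hkey

/-- first inequality of Lemma 9: with `λ₋² = min{Σ_{j∈S'} λ_j² : |G_{S'}| ≥ ℓ}`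
and `S₀` the groups outside `S` with the largest values of `‖u_{G_j}‖₂/λ_j`, with
`ℓ ≤ |G_{S₀}| < ℓ + k₀`, we have
`√(Σ_{j ∉ S ∪ S₀} ‖u_{G_j}‖₂²) ≤ (2λ₋)⁻¹ Σ_{j ∉ S} λ_j ‖u_{G_j}‖₂`. -/
theorem stmt_11 (p m : ℕ) (G : Fin m → Finset (Fin p)) (hG : IsPartition G)
    (k0 : ℕ) (hk0 : k0 = Finset.univ.sup fun j => (G j).card)
    (u : Fin p → ℝ) (S : Finset (Fin m)) (lam : Fin m → ℝ) (hlam : ∀ j, 0 < lam j)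
    (ℓ : ℕ) (hℓ : 1 ≤ ℓ)
    (lamMinus : ℝ)
    (hlamMinus : lamMinus = Real.sqrt (sInf {r : ℝ | ∃ S' : Finset (Fin m),
      ℓ ≤ (S'.biUnion G).card ∧ r = ∑ j ∈ S', lam j ^ 2}))
    (S0 : Finset (Fin m)) (hS0S : Disjoint S0 S)
    (hS0top : ∀ j ∈ S0, ∀ j', j' ∉ S → j' ∉ S0 →
      norm2 (restr (G j') u) / lam j' ≤ norm2 (restr (G j) u) / lam j)
    (hcard1 : ℓ ≤ (S0.biUnion G).card) (hcard2 : (S0.biUnion G).card < ℓ + k0) :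
    Real.sqrt (∑ j ∈ Finset.univ \ (S ∪ S0), norm2 (restr (G j) u) ^ 2) ≤
      (2 * lamMinus)⁻¹ * ∑ j ∈ Finset.univ \ S, lam j * norm2 (restr (G j) u) :=
  stmt_11_general p m G u S lam hlam ℓ hℓ lamMinus hlamMinus S0 hS0S hS0top hcard1
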